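/- arXiv:1811.05207 — 3 statements merged into one kernel-verified Lean document; each statement's English description precedes it below -/
import Mathlib

section
/- The map T is injective on E: if φ = (φ_1,…,φ_N) and ψ = (ψ_1,…,ψ_N) belong to E and T_i(φ) = T_i(ψ) m_i-a.e. for every i = 1,…,N, then φ_i = ψ_i m_i-a.e. for every i. -/
open MeasureTheory Filter
open scoped ENNReal

noncomputable section

/-- The density kernel `γ_φ(x) = K(x) exp(∑_j φ_j(x_j))`. -/
def gammaFn {N : ℕ} {X : Fin N → Type*} (K : (∀ i, X i) → ℝ) (φ : ∀ i, X i → ℝ)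
    (x : ∀ i, X i) : ℝ :=
  K x * Real.exp (∑ j, φ j (x j))

/-- `T_i(φ)(x_i) = ∫_{X_{-i}} K(x_i, x_{-i}) exp(∑_j φ_j(x_j)) dm_{-i}(x_{-i})`.
Since every `m j` is a probability measure, integrating over the full product
(with the `i`-th coordinate replaced by `x_i` via `Function.update`) agrees with
integrating over `∏_{j ≠ i} X_j`. -/
def schrT {N : ℕ} {X : Fin N → Type*} [∀ i, MeasurableSpace (X i)]
    (m : ∀ i, Measure (X i)) (K : (∀ i, X i) → ℝ) (φ : ∀ i, X i → ℝ)
    (i : Fin N) (xi : X i) : ℝ :=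
  ∫ y, gammaFn K φ (Function.update y i xi) ∂Measure.pi m

/-- `L_{φ,i}(h)(x_i)`, the conditional-expectation type operator obtained by
linearizing the Schrödinger system. -/
def schrL {N : ℕ} {X : Fin N → Type*} [∀ i, MeasurableSpace (X i)]
    (m : ∀ i, Measure (X i)) (K : (∀ i, X i) → ℝ) (φ h : ∀ i, X i → ℝ)
    (i : Fin N) (xi : X i) : ℝ :=
  (∫ y, gammaFn K φ (Function.update y i xi) *
      ∑ j ∈ Finset.univ.erase i, h j (Function.update y i xi j) ∂Measure.pi m) /
  (∫ y, gammaFn K φ (Function.update y i xi) ∂Measure.pi m)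

/-- A tuple of essentially bounded measurable functions. -/
def BddTuple {N : ℕ} {X : Fin N → Type*} [∀ i, MeasurableSpace (X i)]
    (m : ∀ i, Measure (X i)) (φ : ∀ i, X i → ℝ) : Prop :=
  ∀ i, Measurable (φ i) ∧ MemLp (φ i) ⊤ (m i)

/-- Membership in `E`: essentially bounded measurable tuples with
`∫ φ_i dm_i = 0` for `i = 1, …, N-1` (i.e. all but the last index). -/
def InE {N : ℕ} {X : Fin N → Type*} [∀ i, MeasurableSpace (X i)]
    (m : ∀ i, Measure (X i)) (φ : ∀ i, X i → ℝ) : Prop :=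
  BddTuple m φ ∧ ∀ i : Fin N, (i : ℕ) < N - 1 → ∫ x, φ i x ∂m i = 0

/-- Membership in `F`: essentially bounded measurable tuples whose integrals all coincide. -/
def InF {N : ℕ} {X : Fin N → Type*} [∀ i, MeasurableSpace (X i)]
    (m : ∀ i, Measure (X i)) (μ : ∀ i, X i → ℝ) : Prop :=
  BddTuple m μ ∧ ∀ i j, ∫ x, μ i x ∂m i = ∫ x, μ j x ∂m j

/-- Membership in `F_{++}`: members of `F` which are bounded away from `0`. -/
def InFpp {N : ℕ} {X : Fin N → Type*} [∀ i, MeasurableSpace (X i)]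
    (m : ∀ i, Measure (X i)) (μ : ∀ i, X i → ℝ) : Prop :=
  InF m μ ∧ ∀ i, ∃ c : ℝ, 0 < c ∧ ∀ᵐ x ∂m i, c ≤ μ i x

/-- Membership in `F_{++,M}`: members of `F_{++}` with `1/M ≤ μ_i ≤ M` a.e. -/
def InFppM {N : ℕ} {X : Fin N → Type*} [∀ i, MeasurableSpace (X i)]
    (m : ∀ i, Measure (X i)) (M : ℝ) (μ : ∀ i, X i → ℝ) : Prop :=
  InFpp m μ ∧ ∀ i, ∀ᵐ x ∂m i, 1 / M ≤ μ i x ∧ μ i x ≤ M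

end

/-!
Write `d_k = φ_k - ψ_k` and `D x = ∑ k, d_k (x k)`. Integrating out all coordinates but the
`k`-th (Fubini) gives `∫ (γ_φ - γ_ψ) D = ∑ k, ∫ (T_k φ - T_k ψ) d_k = 0`. On the other hand
`(γ_φ - γ_ψ) D = K (exp (∑ φ) - exp (∑ ψ)) (∑ φ - ∑ ψ) ≥ 0` since `exp` is increasing, with
equality only where `∑ φ = ∑ ψ`; so `D = 0` a.e. A sum of functions of independent coordinates
can only vanish a.e. if every summand is a.e. a constant `c_k` with `∑ c_k = 0`, and the
normalisation `∫ φ_k = ∫ ψ_k = 0` for `k < N - 1` forces all the `c_k` to vanish.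
-/

theorem StrictMono.sub_mul_sub_pos {R : Type*} [Ring R] [LinearOrder R] [IsStrictOrderedRing R]
    {f : R → R} (hf : StrictMono f) {u v : R} (huv : u ≠ v) : 0 < (f u - f v) * (u - v) := by
  rcases huv.lt_or_gt with h | h
  · exact mul_pos_of_neg_of_neg (sub_neg.2 (hf h)) (sub_neg.2 h)
  · exact mul_pos (sub_pos.2 (hf h)) (sub_pos.2 h)

theorem Fin.eq_zero_of_sum_eq_zero_of_forall_lt_pred {N : ℕ} {M : Type*} [AddCommMonoid M]
    {c : Fin N → M} (hsum : ∑ k, c k = 0) (hc : ∀ k : Fin N, (k : ℕ) < N - 1 → c k = 0) :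
    c = 0 := by
  funext j
  by_cases hj : (j : ℕ) < N - 1
  · exact hc j hj
  · rw [Pi.zero_apply, ← hsum, Finset.sum_eq_single j (fun k _ hkj => hc k (by omega)) (by simp)]

theorem Finset.sum_apply_update_eq_add_sum_erase {ι : Type*} [Fintype ι] [DecidableEq ι]
    {X : ι → Type*} {M : Type*} [AddCommMonoid M] (f : ∀ k, X k → M) (y : ∀ k, X k)
    (i : ι) (t : X i) :
    ∑ k, f k (Function.update y i t k) = f i t + ∑ k ∈ Finset.univ.erase i, f k (y k) := by
  rw [← Finset.add_sum_erase _ _ (Finset.mem_univ i), Function.update_self]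
  exact congrArg _ (Finset.sum_congr rfl fun k hk => by
    rw [Function.update_of_ne (Finset.ne_of_mem_erase hk)])

namespace MeasureTheory

theorem MemLp.real_exp {α : Type*} [MeasurableSpace α] {μ : Measure α}
    {f : α → ℝ} (hf : MemLp f ⊤ μ) : MemLp (fun x => Real.exp (f x)) ⊤ μ := by
  refine memLp_top_of_bound (Real.continuous_exp.comp_aestronglyMeasurable hf.1)
    (Real.exp (lpNorm f ⊤ μ)) ?_
  filter_upwards [ae_le_lpNorm_exponent_top hf] with x hx
  rw [Real.norm_eq_abs, abs_of_pos (Real.exp_pos _)]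
  exact Real.exp_le_exp.2 ((le_abs_self _).trans hx)

section Pi

variable {ι : Type*} [Fintype ι] {X : ι → Type*} [∀ i, MeasurableSpace (X i)]
  {m : ∀ i, Measure (X i)} [∀ i, IsProbabilityMeasure (m i)]

theorem memLp_comp_eval {E : Type*} [NormedAddCommGroup E] {p : ℝ≥0∞} {i : ι} {f : X i → E}
    (hf : MemLp f p (m i)) : MemLp (fun x => f (x i)) p (Measure.pi m) :=
  hf.comp_measurePreserving (measurePreserving_eval m i)

theorem memLp_sum_comp_eval {p : ℝ≥0∞} {f : ∀ k, X k → ℝ} (hf : ∀ k, MemLp (f k) p (m k)) :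
    MemLp (fun x => ∑ k, f k (x k)) p (Measure.pi m) :=
  memLp_finsetSum _ fun k _ => memLp_comp_eval (hf k)

variable (m) [DecidableEq ι]

theorem measurePreserving_update_pi (i : ι) :
    MeasurePreserving (fun p : X i × (∀ j, X j) => Function.update p.2 i p.1)
      ((m i).prod (Measure.pi m)) (Measure.pi m) := by
  have hmeas : Measurable fun p : X i × (∀ j, X j) => Function.update p.2 i p.1 :=
    measurable_update'.comp measurable_swap
  refine ⟨hmeas, (Measure.pi_eq fun s hs => ?_).symm⟩
  have hpre : (fun p : X i × (∀ j, X j) => Function.update p.2 i p.1) ⁻¹' Set.univ.pi s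
      = s i ×ˢ Set.univ.pi (Function.update s i Set.univ) := by
    ext ⟨t, y⟩
    simp only [Set.mem_preimage, Set.mem_univ_pi, Set.mem_prod]
    refine ⟨fun hy => ⟨by simpa using hy i, fun j => ?_⟩, fun ⟨ht, hy⟩ j => ?_⟩ <;>
      rcases eq_or_ne j i with rfl | hji
    · simp
    · simpa [hji] using hy j
    · simpa using ht
    · simpa [hji] using hy j
  rw [Measure.map_apply hmeas (.univ_pi hs), hpre, Measure.prod_prod, Measure.pi_pi,
    ← Finset.mul_prod_erase _ (fun j => m j (Function.update s i Set.univ j)) (Finset.mem_univ i),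
    Function.update_self, measure_univ, one_mul,
    ← Finset.mul_prod_erase _ (fun j => m j (s j)) (Finset.mem_univ i)]
  exact congrArg _ (Finset.prod_congr rfl fun j hj => by
    rw [Function.update_of_ne (Finset.ne_of_mem_erase hj)])

theorem integral_pi_eq_integral_integral_update {E : Type*} [NormedAddCommGroup E]
    [NormedSpace ℝ E] (i : ι) {F : (∀ j, X j) → E} (hF : Integrable F (Measure.pi m)) :
    ∫ x, F x ∂Measure.pi m = ∫ t, ∫ y, F (Function.update y i t) ∂Measure.pi m ∂m i := by
  have hmp := measurePreserving_update_pi m i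
  conv_lhs => rw [← hmp.map_eq]
  rw [integral_map hmp.aemeasurable (hmp.map_eq.symm ▸ hF.aestronglyMeasurable)]
  exact integral_prod _ (hmp.integrable_comp_of_integrable hF)

theorem exists_ae_eq_const_of_ae_sum_eq_zero {f : ∀ k, X k → ℝ}
    (hf : ∀ᵐ x ∂Measure.pi m, ∑ k, f k (x k) = 0) :
    ∃ c : ι → ℝ, ∑ k, c k = 0 ∧ ∀ k, f k =ᵐ[m k] fun _ => c k := by
  have hconst : ∀ i, ∃ c, f i =ᵐ[m i] fun _ => c := by
    intro i
    have hprod : ∀ᵐ t ∂m i, ∀ᵐ y ∂Measure.pi m,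
        f i t + ∑ k ∈ Finset.univ.erase i, f k (y k) = 0 := by
      have hf' := (measurePreserving_update_pi m i).quasiMeasurePreserving.ae hf
      simp only [Finset.sum_apply_update_eq_add_sum_erase] at hf'
      exact Measure.ae_ae_of_ae_prod hf'
    obtain ⟨t₀, ht₀⟩ := hprod.exists
    refine ⟨f i t₀, hprod.mono fun t ht => ?_⟩
    obtain ⟨y, hy, hy₀⟩ := (ht.and ht₀).exists
    linarith
  choose c hc using hconst
  refine ⟨c, ?_, hc⟩
  have hcoord : ∀ᵐ x ∂Measure.pi m, ∀ k, f k (x k) = c k :=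
    ae_all_iff.2 fun k => Measure.tendsto_eval_ae_ae.eventually (hc k)
  obtain ⟨x, hx, hx₀⟩ := (hcoord.and hf).exists
  simpa only [hx] using hx₀

end Pi

end MeasureTheory

theorem gammaFn_sub_mul_sum_sub {N : ℕ} {X : Fin N → Type*} (K : (∀ i, X i) → ℝ)
    (φ ψ : ∀ i, X i → ℝ) (x : ∀ i, X i) :
    (gammaFn K φ x - gammaFn K ψ x) * ∑ k, (φ k (x k) - ψ k (x k)) =
      K x * ((Real.exp (∑ k, φ k (x k)) - Real.exp (∑ k, ψ k (x k))) *
        (∑ k, φ k (x k) - ∑ k, ψ k (x k))) := by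
  rw [gammaFn, gammaFn, Finset.sum_sub_distrib]
  ring

section Schrodinger

variable {N : ℕ} {X : Fin N → Type*} [∀ i, MeasurableSpace (X i)]
  {m : ∀ i, Measure (X i)} [∀ i, IsProbabilityMeasure (m i)] {K : (∀ i, X i) → ℝ}

theorem memLp_top_gammaFn (hK : MemLp K ⊤ (Measure.pi m)) {φ : ∀ i, X i → ℝ}
    (hφ : ∀ i, MemLp (φ i) ⊤ (m i)) : MemLp (gammaFn K φ) ⊤ (Measure.pi m) :=
  (memLp_sum_comp_eval hφ).real_exp.mul' hK

theorem integral_schrT_mul (φ : ∀ i, X i → ℝ) (i : Fin N) {f : X i → ℝ}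
    (hint : Integrable (fun x => gammaFn K φ x * f (x i)) (Measure.pi m)) :
    ∫ t, schrT m K φ i t * f t ∂m i = ∫ x, gammaFn K φ x * f (x i) ∂Measure.pi m := by
  rw [integral_pi_eq_integral_integral_update m i hint]
  simp only [Function.update_self, integral_mul_const, schrT]

theorem integral_gammaFn_sub_mul_sum_eq_zero (hK : MemLp K ⊤ (Measure.pi m))
    {φ ψ : ∀ i, X i → ℝ} (hφ : ∀ i, MemLp (φ i) ⊤ (m i)) (hψ : ∀ i, MemLp (ψ i) ⊤ (m i))
    (h : ∀ i, schrT m K φ i =ᵐ[m i] schrT m K ψ i) :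
    ∫ x, (gammaFn K φ x - gammaFn K ψ x) * ∑ k, (φ k (x k) - ψ k (x k)) ∂Measure.pi m = 0 := by
  have hint : ∀ χ : ∀ i, X i → ℝ, (∀ i, MemLp (χ i) ⊤ (m i)) → ∀ k,
      Integrable (fun x => gammaFn K χ x * (φ k (x k) - ψ k (x k))) (Measure.pi m) :=
    fun χ hχ k =>
      ((memLp_comp_eval ((hφ k).sub (hψ k))).mul' (memLp_top_gammaFn hK hχ)).integrable le_top
  simp_rw [Finset.mul_sum, sub_mul]
  rw [integral_finsetSum _ fun k _ => by exact (hint φ hφ k).sub (hint ψ hψ k)]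
  refine Finset.sum_eq_zero fun k _ => ?_
  rw [integral_sub (hint φ hφ k) (hint ψ hψ k), sub_eq_zero,
    ← integral_schrT_mul (f := fun t => φ k t - ψ k t) φ k (hint φ hφ k),
    ← integral_schrT_mul (f := fun t => φ k t - ψ k t) ψ k (hint ψ hψ k)]
  exact integral_congr_ae ((h k).mono fun t ht => by simp only [ht])

theorem ae_sum_sub_eq_zero_of_schrT_ae_eq (hK : MemLp K ⊤ (Measure.pi m))
    (hK_pos : ∀ᵐ x ∂Measure.pi m, 0 < K x)
    {φ ψ : ∀ i, X i → ℝ} (hφ : ∀ i, MemLp (φ i) ⊤ (m i)) (hψ : ∀ i, MemLp (ψ i) ⊤ (m i))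
    (h : ∀ i, schrT m K φ i =ᵐ[m i] schrT m K ψ i) :
    ∀ᵐ x ∂Measure.pi m, ∑ k, (φ k (x k) - ψ k (x k)) = 0 := by
  have hnonneg : 0 ≤ᵐ[Measure.pi m]
      fun x => (gammaFn K φ x - gammaFn K ψ x) * ∑ k, (φ k (x k) - ψ k (x k)) := by
    filter_upwards [hK_pos] with x hx
    rw [Pi.zero_apply, gammaFn_sub_mul_sum_sub]
    exact mul_nonneg hx.le <|
      Monovary.sub_mul_sub_nonneg (g := id) (fun _ _ h => Real.exp_monotone h.le) _ _
  have hint : Integrable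
      (fun x => (gammaFn K φ x - gammaFn K ψ x) * ∑ k, (φ k (x k) - ψ k (x k)))
      (Measure.pi m) :=
    ((memLp_sum_comp_eval fun k => (hφ k).sub (hψ k)).mul'
      ((memLp_top_gammaFn hK hφ).sub (memLp_top_gammaFn hK hψ))).integrable le_top
  filter_upwards [(integral_eq_zero_iff_of_nonneg_ae hnonneg hint).1
    (integral_gammaFn_sub_mul_sum_eq_zero hK hφ hψ h), hK_pos] with x hx hKx
  rw [Pi.zero_apply, gammaFn_sub_mul_sum_sub] at hx
  rw [Finset.sum_sub_distrib, sub_eq_zero]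
  by_contra hne
  exact (mul_pos hKx (Real.exp_strictMono.sub_mul_sub_pos hne)).ne' hx

end Schrodinger

theorem schrT_injective_on_E_general
    {N : ℕ} {X : Fin N → Type*} [∀ i, MeasurableSpace (X i)]
    (m : ∀ i, MeasureTheory.Measure (X i)) [∀ i, MeasureTheory.IsProbabilityMeasure (m i)]
    (K : (∀ i, X i) → ℝ) (a b : ℝ) (ha : 0 < a)
    (hK : Measurable K) (hKb : ∀ᵐ x ∂MeasureTheory.Measure.pi m, a ≤ K x ∧ K x ≤ b)
    (φ ψ : ∀ i, X i → ℝ) (hφ : InE m φ) (hψ : InE m ψ)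
    (h : ∀ i, schrT m K φ i =ᵐ[m i] schrT m K ψ i) :
    ∀ i, φ i =ᵐ[m i] ψ i := by
  have hK_pos : ∀ᵐ x ∂Measure.pi m, 0 < K x := hKb.mono fun x hx => ha.trans_le hx.1
  have hK_mem : MemLp K ⊤ (Measure.pi m) := memLp_top_of_bound hK.aestronglyMeasurable b <| by
    filter_upwards [hKb, hK_pos] with x hx hx_pos
    rw [Real.norm_eq_abs, abs_of_pos hx_pos]
    exact hx.2
  obtain ⟨c, hc_sum, hc⟩ := exists_ae_eq_const_of_ae_sum_eq_zero m
    (f := fun k t => φ k t - ψ k t) (ae_sum_sub_eq_zero_of_schrT_ae_eq hK_mem hK_pos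
      (fun i => (hφ.1 i).2) (fun i => (hψ.1 i).2) h)
  have hc_zero : c = 0 := by
    refine Fin.eq_zero_of_sum_eq_zero_of_forall_lt_pred hc_sum fun k hk => ?_
    have hck := integral_congr_ae (hc k)
    rw [integral_sub ((hφ.1 k).2.integrable le_top) ((hψ.1 k).2.integrable le_top),
      hφ.2 k hk, hψ.2 k hk] at hck
    simpa using hck.symm
  intro i
  filter_upwards [hc i] with t ht
  simpa [hc_zero, sub_eq_zero] using ht

/-- The map `T` is injective on `E`. -/
theorem schrT_injective_on_E
    {N : ℕ} (hN : 2 ≤ N) {X : Fin N → Type*} [∀ i, MeasurableSpace (X i)]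
    (m : ∀ i, MeasureTheory.Measure (X i)) [∀ i, MeasureTheory.IsProbabilityMeasure (m i)]
    (K : (∀ i, X i) → ℝ) (a b : ℝ) (ha : 0 < a) (hab : a ≤ b)
    (hK : Measurable K) (hKb : ∀ᵐ x ∂MeasureTheory.Measure.pi m, a ≤ K x ∧ K x ≤ b)
    (φ ψ : ∀ i, X i → ℝ) (hφ : InE m φ) (hψ : InE m ψ)
    (h : ∀ i, schrT m K φ i =ᵐ[m i] schrT m K ψ i) :
    ∀ i, φ i =ᵐ[m i] ψ i :=
  schrT_injective_on_E_general m K a b ha hK hKb φ ψ hφ hψ h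
end

section
/- A priori bound on Schrödinger potentials: for every M ≥ 1 there is a constant R_M (depending only on M, N and the bounds a, b on K) such that whenever φ ∈ E satisfies T(φ) ∈ F_{++,M}, one has ‖φ_i‖_{L^∞(m_i)} ≤ R_M for every i = 1,…,N. -/
open MeasureTheory Filter
open scoped ENNReal

/-!
Splitting off the `i`-th exponential factor, `T_i(φ)(x_i) = exp(φ_i(x_i)) · A_i(x_i)` with
`a C_i ≤ A_i ≤ b C_i`, where `C_i = ∫ exp(∑_{j ≠ i} φ_j) dm` does not depend on `x_i`. Hence
`1/M ≤ T_i(φ) ≤ M` pins `φ_i` to within `c = |log M| + |log a| + |log b|` of the constant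
`-log C_i`. For `i < N - 1` the normalisation `∫ φ_i = 0` bounds that constant by `c`, so
`|φ_i| ≤ 2c`; feeding these bounds into `C_{N-1}` gives `|log C_{N-1}| ≤ 2Nc`, and so
`|φ_{N-1}| ≤ (2N + 1)c`.
-/

open Function Real

section Pi

variable {ι : Type*} [Fintype ι] [DecidableEq ι] {X : ι → Type*} [∀ i, MeasurableSpace (X i)]
  (μ : ∀ i, Measure (X i)) [∀ i, IsProbabilityMeasure (μ i)]

theorem measurePreserving_update (i : ι) :
    MeasurePreserving (fun p : X i × (∀ j, X j) => update p.2 i p.1)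
      ((μ i).prod (Measure.pi μ)) (Measure.pi μ) := by
  have hmeas : Measurable (fun p : X i × (∀ j, X j) => update p.2 i p.1) :=
    measurable_update'.comp (measurable_snd.prodMk measurable_fst)
  refine ⟨hmeas, (Measure.pi_eq fun s hs => ?_).symm⟩
  have hpre : (fun p : X i × (∀ j, X j) => update p.2 i p.1) ⁻¹' Set.univ.pi s
      = s i ×ˢ Set.univ.pi (update s i Set.univ) := by
    ext p
    simp only [Set.mem_preimage, Set.mem_prod, Set.update_mem_pi_iff]
    grind
  rw [Measure.map_apply hmeas (MeasurableSet.univ_pi hs), hpre, Measure.prod_prod,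
    Measure.pi_pi]
  simp_rw [apply_update (fun j => μ j), measure_univ]
  rw [Finset.prod_update_of_mem (Finset.mem_univ i), one_mul, Finset.sdiff_singleton_eq_erase]
  exact Finset.mul_prod_erase _ (fun j => μ j (s j)) (Finset.mem_univ i)

theorem ae_ae_update_of_ae {P : (∀ j, X j) → Prop} (hP : ∀ᵐ x ∂Measure.pi μ, P x) (i : ι) :
    ∀ᵐ xi ∂μ i, ∀ᵐ y ∂Measure.pi μ, P (update y i xi) :=
  Measure.ae_ae_of_ae_prod
    ((measurePreserving_update μ i).quasiMeasurePreserving.tendsto_ae.eventually hP)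

end Pi

section ProbabilitySpace

variable {α : Type*} [MeasurableSpace α] {μ : Measure α}

theorem integral_mul_mem_Icc_of_ae_mem_Icc {f g : α → ℝ} {a b : ℝ}
    (hf : AEStronglyMeasurable f μ) (hab : ∀ᵐ x ∂μ, f x ∈ Set.Icc a b)
    (hg : Integrable g μ) (hg0 : ∀ᵐ x ∂μ, 0 ≤ g x) :
    ∫ x, f x * g x ∂μ ∈ Set.Icc (a * ∫ x, g x ∂μ) (b * ∫ x, g x ∂μ) := by
  have hfg : Integrable (fun x => f x * g x) μ :=
    hg.bdd_mul hf (hab.mono fun x hx => abs_le_max_abs_abs hx.1 hx.2)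
  rw [← integral_const_mul, ← integral_const_mul]
  constructor
  · refine integral_mono_ae (hg.const_mul a) hfg ?_
    filter_upwards [hab, hg0] with x hx hx0 using mul_le_mul_of_nonneg_right hx.1 hx0
  · refine integral_mono_ae hfg (hg.const_mul b) ?_
    filter_upwards [hab, hg0] with x hx hx0 using mul_le_mul_of_nonneg_right hx.2 hx0

theorem integrable_exp_of_ae_abs_le [IsFiniteMeasure μ] {g : α → ℝ} {r : ℝ}
    (hg : AEStronglyMeasurable g μ) (hr : ∀ᵐ x ∂μ, |g x| ≤ r) :
    Integrable (fun x => exp (g x)) μ := by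
  refine (integrable_const (exp r)).mono' (continuous_exp.comp_aestronglyMeasurable hg) ?_
  filter_upwards [hr] with x hx
  rw [norm_of_nonneg (exp_pos _).le]
  exact exp_le_exp.2 (abs_le.1 hx).2

variable [IsProbabilityMeasure μ]

theorem abs_log_integral_exp_le {g : α → ℝ} {r : ℝ} (hg : AEStronglyMeasurable g μ)
    (hr : ∀ᵐ x ∂μ, |g x| ≤ r) : |log (∫ x, exp (g x) ∂μ)| ≤ r := by
  have hint := integrable_exp_of_ae_abs_le hg hr
  have hlower : exp (-r) ≤ ∫ x, exp (g x) ∂μ := by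
    simpa using integral_mono_ae (integrable_const (exp (-r))) hint
      (hr.mono fun x hx => exp_le_exp.2 (abs_le.1 hx).1)
  have hupper : ∫ x, exp (g x) ∂μ ≤ exp r := by
    simpa using integral_mono_ae hint (integrable_const (exp r))
      (hr.mono fun x hx => exp_le_exp.2 (abs_le.1 hx).2)
  have hpos := (exp_pos (-r)).trans_le hlower
  rw [abs_le, le_log_iff_exp_le hpos, log_le_iff_le_exp hpos]
  exact ⟨hlower, hupper⟩

theorem ae_abs_le_two_mul_of_integral_eq_zero {f : α → ℝ} {t c : ℝ} (hf : Integrable f μ)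
    (hf0 : ∫ x, f x ∂μ = 0) (hc : ∀ᵐ x ∂μ, |f x + t| ≤ c) : ∀ᵐ x ∂μ, |f x| ≤ 2 * c := by
  have ht : |t| ≤ c := by
    simpa [integral_add hf (integrable_const t), hf0] using
      norm_integral_le_of_norm_le_const (μ := μ) (f := fun x => f x + t) hc
  filter_upwards [hc] with x hx
  rw [abs_le] at hx ht ⊢
  constructor <;> linarith

end ProbabilitySpace

theorem abs_add_log_le_of_exp_mul_mem_Icc {t A C a b M : ℝ} (ha : 0 < a) (hC : 0 < C)
    (hM : 0 < M) (hA : A ∈ Set.Icc (a * C) (b * C)) (hT : exp t * A ∈ Set.Icc (1 / M) M) :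
    |t + log C| ≤ |log M| + |log a| + |log b| := by
  have hA0 : 0 < A := (mul_pos ha hC).trans_le hA.1
  have hb : 0 < b := pos_of_mul_pos_left (hA0.trans_le hA.2) hC.le
  have hlogT : t + log A = log (exp t * A) := by rw [log_mul (exp_pos t).ne' hA0.ne', log_exp]
  have hT₁ : -log M ≤ t + log A := by
    rw [hlogT, ← log_inv, ← one_div]; exact log_le_log (by positivity) hT.1
  have hT₂ : t + log A ≤ log M := hlogT ▸ log_le_log (by positivity) hT.2
  have hA₁ : log a + log C ≤ log A := by
    rw [← log_mul ha.ne' hC.ne']; exact log_le_log (by positivity) hA.1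
  have hA₂ : log A ≤ log b + log C := by
    rw [← log_mul hb.ne' hC.ne']; exact log_le_log hA0 hA.2
  rw [abs_le]
  constructor <;>
    linarith [le_abs_self (log M), neg_abs_le (log M), le_abs_self (log a), neg_abs_le (log a),
      le_abs_self (log b), neg_abs_le (log b)]

section Schrodinger

variable {N : ℕ} {X : Fin N → Type*}

def sumErase (φ : ∀ i, X i → ℝ) (i : Fin N) (x : ∀ j, X j) : ℝ :=
  ∑ j ∈ Finset.univ.erase i, φ j (x j)

theorem sum_update_eq_add_sumErase (φ : ∀ i, X i → ℝ) (i : Fin N) (xi : X i) (y : ∀ j, X j) :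
    ∑ j, φ j (update y i xi j) = φ i xi + sumErase φ i y := by
  rw [← Finset.add_sum_erase _ _ (Finset.mem_univ i), update_self, sumErase]
  exact congrArg _ (Finset.sum_congr rfl fun j hj => by
    rw [update_of_ne (Finset.ne_of_mem_erase hj)])

variable [∀ i, MeasurableSpace (X i)] (m : ∀ i, Measure (X i))

theorem schrT_eq_exp_mul (K : (∀ i, X i) → ℝ) (φ : ∀ i, X i → ℝ) (i : Fin N) (xi : X i) :
    schrT m K φ i xi =
      exp (φ i xi) * ∫ y, K (update y i xi) * exp (sumErase φ i y) ∂Measure.pi m := by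
  rw [schrT, ← integral_const_mul]
  congr 1 with y
  rw [gammaFn, sum_update_eq_add_sumErase, exp_add]
  ring

theorem measurable_sumErase {φ : ∀ i, X i → ℝ} (hφ : ∀ j, Measurable (φ j)) (i : Fin N) :
    Measurable (sumErase φ i) :=
  Finset.measurable_sum _ fun j _ => (hφ j).comp (measurable_pi_apply j)

variable [∀ i, IsProbabilityMeasure (m i)]

theorem ae_abs_sumErase_le {φ : ∀ i, X i → ℝ} {i : Fin N} {r : Fin N → ℝ}
    (hr : ∀ j ≠ i, ∀ᵐ x ∂m j, |φ j x| ≤ r j) :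
    ∀ᵐ y ∂Measure.pi m, |sumErase φ i y| ≤ ∑ j ∈ Finset.univ.erase i, r j := by
  have hr' : ∀ᵐ y ∂Measure.pi m, ∀ j ∈ Finset.univ.erase i, |φ j (y j)| ≤ r j := by
    simp only [Finset.mem_erase, Finset.mem_univ, and_true, ae_all_iff]
    exact fun j hj => Measure.tendsto_eval_ae_ae.eventually (hr j hj)
  filter_upwards [hr'] with y hy
  exact (Finset.abs_sum_le_sum_abs _ _).trans (Finset.sum_le_sum hy)

theorem ae_abs_add_log_integral_exp_sumErase_le {K : (∀ i, X i) → ℝ} {a b M : ℝ} (ha : 0 < a)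
    (hK : Measurable K) (hKb : ∀ᵐ x ∂Measure.pi m, a ≤ K x ∧ K x ≤ b)
    {φ : ∀ i, X i → ℝ} (hφ : BddTuple m φ) (hM : 0 < M) {i : Fin N}
    (hT : ∀ᵐ xi ∂m i, 1 / M ≤ schrT m K φ i xi ∧ schrT m K φ i xi ≤ M) :
    ∀ᵐ xi ∂m i, |φ i xi + log (∫ y, exp (sumErase φ i y) ∂Measure.pi m)| ≤
      |log M| + |log a| + |log b| := by
  have hsum := measurable_sumErase (fun j => (hφ j).1) i
  have hint : Integrable (fun y => exp (sumErase φ i y)) (Measure.pi m) :=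
    integrable_exp_of_ae_abs_le hsum.aestronglyMeasurable
      (ae_abs_sumErase_le m fun j _ => ae_le_lpNorm_exponent_top (hφ j).2)
  filter_upwards [ae_ae_update_of_ae m hKb i, hT] with xi hKxi hTxi
  rw [schrT_eq_exp_mul] at hTxi
  exact abs_add_log_le_of_exp_mul_mem_Icc ha (integral_exp_pos hint) hM
    (integral_mul_mem_Icc_of_ae_mem_Icc (hK.comp measurable_update_left).aestronglyMeasurable
      hKxi hint (ae_of_all _ fun y => (exp_pos _).le)) hTxi

theorem abs_log_integral_exp_sumErase_le {φ : ∀ i, X i → ℝ} (hφ : ∀ j, Measurable (φ j))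
    {i : Fin N} {r : ℝ} (hr : ∀ j ≠ i, ∀ᵐ x ∂m j, |φ j x| ≤ r) (hr0 : 0 ≤ r) :
    |log (∫ y, exp (sumErase φ i y) ∂Measure.pi m)| ≤ N * r := by
  refine (abs_log_integral_exp_le (measurable_sumErase hφ i).aestronglyMeasurable
    (ae_abs_sumErase_le m hr)).trans ?_
  calc ∑ _j ∈ Finset.univ.erase i, r ≤ ∑ _j : Fin N, r :=
        Finset.sum_le_sum_of_subset_of_nonneg (Finset.erase_subset _ _) fun _ _ _ => hr0
    _ = N * r := by simp

end Schrodinger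

theorem schrodinger_potentials_apriori_bound_general
    {N : ℕ} {X : Fin N → Type*} [∀ i, MeasurableSpace (X i)]
    (m : ∀ i, MeasureTheory.Measure (X i)) [∀ i, MeasureTheory.IsProbabilityMeasure (m i)]
    (K : (∀ i, X i) → ℝ) (a b : ℝ) (ha : 0 < a)
    (hK : Measurable K) (hKb : ∀ᵐ x ∂MeasureTheory.Measure.pi m, a ≤ K x ∧ K x ≤ b) :
    ∀ M : ℝ, 1 ≤ M → ∃ R : ℝ, ∀ φ : ∀ i, X i → ℝ,
      InE m φ → InFppM m M (schrT m K φ) →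
      ∀ i, eLpNorm (φ i) ⊤ (m i) ≤ ENNReal.ofReal R := by
  intro M hM
  set c := |log M| + |log a| + |log b|
  refine ⟨(2 * N + 1) * c, fun φ ⟨hφ, hmean⟩ hT i => ?_⟩
  have hdev j := ae_abs_add_log_integral_exp_sumErase_le m ha hK hKb hφ (by linarith) (hT.2 j)
  have hmean_bound : ∀ j : Fin N, (j : ℕ) < N - 1 → ∀ᵐ x ∂m j, |φ j x| ≤ 2 * c := fun j hj =>
    ae_abs_le_two_mul_of_integral_eq_zero ((hφ j).2.integrable le_top) (hmean j hj) (hdev j)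
  have hc : 0 ≤ c := by positivity
  have hN : (1 : ℝ) ≤ N := by exact_mod_cast i.pos
  rw [eLpNorm_exponent_top]
  refine eLpNormEssSup_le_of_ae_bound ?_
  by_cases hi : (i : ℕ) < N - 1
  · filter_upwards [hmean_bound i hi] with x hx
    rw [norm_eq_abs]
    nlinarith
  · have hothers : ∀ j ≠ i, ∀ᵐ x ∂m j, |φ j x| ≤ 2 * c := fun j hj =>
      hmean_bound j (by have := Fin.val_ne_of_ne hj; omega)
    have hlog := abs_log_integral_exp_sumErase_le m (fun j => (hφ j).1) hothers (by positivity)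
    filter_upwards [hdev i] with x hx
    rw [abs_le] at hx hlog
    rw [norm_eq_abs, abs_le]
    constructor <;> nlinarith

/-- A priori bound on Schrödinger potentials: for every `M ≥ 1`
there is `R_M` such that `φ ∈ E` with `T(φ) ∈ F_{++,M}` satisfies
`‖φ_i‖_{L^∞} ≤ R_M` for every `i`. -/
theorem schrodinger_potentials_apriori_bound
    {N : ℕ} (hN : 2 ≤ N) {X : Fin N → Type*} [∀ i, MeasurableSpace (X i)]
    (m : ∀ i, MeasureTheory.Measure (X i)) [∀ i, MeasureTheory.IsProbabilityMeasure (m i)]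
    (K : (∀ i, X i) → ℝ) (a b : ℝ) (ha : 0 < a) (hab : a ≤ b)
    (hK : Measurable K) (hKb : ∀ᵐ x ∂MeasureTheory.Measure.pi m, a ≤ K x ∧ K x ≤ b) :
    ∀ M : ℝ, 1 ≤ M → ∃ R : ℝ, ∀ φ : ∀ i, X i → ℝ,
      InE m φ → InFppM m M (schrT m K φ) →
      ∀ i, eLpNorm (φ i) ⊤ (m i) ≤ ENNReal.ofReal R :=
  schrodinger_potentials_apriori_bound_general m K a b ha hK hKb
end

section
/- L^∞ Lipschitz estimate for the Schrödinger map: for every M ≥ 1 there is a constant C_M such that whenever φ, ψ ∈ E satisfy T(φ) = μ and T(ψ) = ν with μ, ν ∈ F_{++,M}, one has max_i ‖φ_i − ψ_i‖_{L^∞(m_i)} ≤ C_M max_i ‖μ_i − ν_i‖_{L^∞(m_i)}. -/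
open MeasureTheory Filter
open scoped ENNReal

/-!
Write `T_i(φ) = e^{φ_i} A_i(φ)`, where `A_i(φ)` integrates
`K e^{∑_{j ≠ i} φ_j}` over the other coordinates and hence lies between `a R_i(φ)` and
`b R_i(φ)`, with `R_i(φ) = ∫ e^{∑_{j ≠ i} φ_j}`.

A priori bound: from `1/M ≤ T_i(φ) ≤ M`, every `φ_i + log R_i(φ)` lies in an interval of length
`log (M / a) + log (M b)`. A mean-zero coordinate is then bounded by that length; this bounds
`R_i(φ)` for the one remaining index `i`, and hence `φ_i` too. So all solutions with data in
`F_{++,M}` are bounded by a common constant `B`.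

Lipschitz estimate: put `Δ = φ - ψ` and `S(x) = ∑ Δ_i(x_i)`. Integrating `(γ_φ - γ_ψ) S`
coordinatewise gives `∑ ∫ Δ_i (μ_i - ν_i) ≤ N ‖Δ‖_∞ ‖μ - ν‖_∞`, while strong monotonicity of `exp`
on `[-NB, NB]` bounds it below by `a e^{-NB} ∫ S² = a e^{-NB} ∑ ‖Δ_i‖₂²`; the cross terms vanish
because all but one `Δ_i` have mean zero. Pointwise,
`Δ_i = (log μ_i - log ν_i) - (log A_i(φ) - log A_i(ψ))`, and the second difference is bounded by a
multiple of `∑ ‖Δ_j‖₁`. By AM-GM this is at most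
`‖Δ‖_∞ / 2` plus a multiple of `‖Δ‖₂² / ‖Δ‖_∞ ≲ ‖μ - ν‖_∞`, and the half is absorbed.
-/
open MeasureTheory Filter Function Real
open scoped ENNReal

namespace SchrodingerMap

theorem mul_sq_le_exp_sub_exp_mul_sub {r s t : ℝ} (hs : r ≤ exp s) (ht : r ≤ exp t) :
    r * (s - t) ^ 2 ≤ (exp s - exp t) * (s - t) := by
  wlog hts : t ≤ s generalizing s t
  · linarith [this ht hs (le_of_not_ge hts)]
  have h := mul_le_mul_of_nonneg_left (add_one_le_exp (s - t)) (exp_pos t).le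
  rw [← exp_add, add_sub_cancel] at h
  nlinarith [mul_le_mul_of_nonneg_right ht (sq_nonneg (s - t)), sub_nonneg.2 hts]

theorem abs_exp_sub_exp_le {c s t : ℝ} (hs : s ≤ c) (ht : t ≤ c) :
    |exp s - exp t| ≤ exp c * |s - t| := by
  wlog hts : t ≤ s generalizing s t
  · rw [abs_sub_comm, abs_sub_comm s]; exact this ht hs (le_of_not_ge hts)
  have h := mul_le_mul_of_nonneg_left (add_one_le_exp (t - s)) (exp_pos s).le
  rw [← exp_add, add_sub_cancel] at h
  rw [abs_of_nonneg (sub_nonneg.2 (exp_le_exp.2 hts)), abs_of_nonneg (sub_nonneg.2 hts)]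
  nlinarith [mul_le_mul_of_nonneg_right (exp_le_exp.2 hs) (sub_nonneg.2 hts)]

theorem abs_log_sub_log_le {r u v : ℝ} (hr : 0 < r) (hu : r ≤ u) (hv : r ≤ v) :
    |log u - log v| ≤ |u - v| / r := by
  wlog hvu : v ≤ u generalizing u v
  · rw [abs_sub_comm, abs_sub_comm u]; exact this hv hu (le_of_not_ge hvu)
  have hv0 : 0 < v := hr.trans_le hv
  have h := log_le_sub_one_of_pos (div_pos (hr.trans_le hu) hv0)
  rw [log_div (hr.trans_le hu).ne' hv0.ne', div_sub_one hv0.ne'] at h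
  rw [abs_of_nonneg (sub_nonneg.2 (log_le_log hv0 hvu)), abs_of_nonneg (sub_nonneg.2 hvu)]
  exact h.trans (div_le_div_of_nonneg_left (sub_nonneg.2 hvu) hr hv)

theorem abs_le_half_add_sq_div {ε : ℝ} (hε : 0 < ε) (x : ℝ) : |x| ≤ ε / 2 + x ^ 2 / (2 * ε) := by
  rw [div_add_div _ _ two_ne_zero (by positivity), le_div_iff₀ (by positivity)]
  nlinarith [sq_nonneg (|x| - ε), sq_abs x]

theorem ae_abs_le_of_integral_eq_zero {α : Type*} [MeasurableSpace α] {μ : Measure α}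
    [IsProbabilityMeasure μ] {f : α → ℝ} {l u : ℝ} (hf : AEMeasurable f μ)
    (hlu : ∀ᵐ x ∂μ, f x ∈ Set.Icc l u) (h0 : ∫ x, f x ∂μ = 0) :
    ∀ᵐ x ∂μ, |f x| ≤ u - l := by
  have hint : Integrable f μ := Integrable.of_mem_Icc l u hf hlu
  have hl : l ≤ 0 := by
    simpa [h0] using integral_mono_ae (integrable_const l) hint (hlu.mono fun x hx => hx.1)
  have hu : 0 ≤ u := by
    simpa [h0] using integral_mono_ae hint (integrable_const u) (hlu.mono fun x hx => hx.2)
  filter_upwards [hlu] with x hx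
  exact abs_le.2 ⟨by linarith [hx.1], by linarith [hx.2]⟩

theorem integral_abs_le_half_add {α : Type*} [MeasurableSpace α] {μ : Measure α}
    [IsProbabilityMeasure μ] {f : α → ℝ} (hf : MemLp f 2 μ) {ε : ℝ} (hε : 0 < ε) :
    ∫ x, |f x| ∂μ ≤ ε / 2 + (∫ x, f x ^ 2 ∂μ) / (2 * ε) := by
  have hint : Integrable (fun x => ε / 2 + f x ^ 2 / (2 * ε)) μ :=
    (integrable_const _).add (hf.integrable_sq.div_const _)
  refine (integral_mono (hf.integrable one_le_two).abs hint
    fun x => abs_le_half_add_sq_div hε (f x)).trans_eq ?_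
  rw [integral_add (integrable_const _) (hf.integrable_sq.div_const _), integral_div (2 * ε)]
  simp

section Pi

variable {ι : Type*} {X : ι → Type*} [∀ i, MeasurableSpace (X i)] {m : ∀ i, Measure (X i)}

theorem iSup_eLpNorm_top_le_ofReal {f : ∀ i, X i → ℝ} {r : ℝ}
    (h : ∀ i, ∀ᵐ x ∂m i, |f i x| ≤ r) : ⨆ i, eLpNorm (f i) ⊤ (m i) ≤ ENNReal.ofReal r :=
  iSup_le fun i => by rw [eLpNorm_exponent_top]; exact eLpNormEssSup_le_of_ae_bound (h i)

variable [Fintype ι]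

theorem ae_abs_le_toReal_iSup_eLpNorm_top {f : ∀ i, X i → ℝ} (hf : ∀ i, MemLp (f i) ⊤ (m i))
    (i : ι) : ∀ᵐ x ∂m i, |f i x| ≤ (⨆ j, eLpNorm (f j) ⊤ (m j)).toReal := by
  have hne : ⨆ j, eLpNorm (f j) ⊤ (m j) ≠ ⊤ := iSup_ne_top fun j => (hf j).eLpNorm_ne_top
  filter_upwards [ae_le_eLpNormEssSup (f := f i) (μ := m i)] with x hx
  rw [← eLpNorm_exponent_top] at hx
  simpa using ENNReal.toReal_mono hne (hx.trans (le_iSup (fun j => eLpNorm (f j) ⊤ (m j)) i))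

variable [∀ i, IsProbabilityMeasure (m i)]

theorem ae_eval_of_ae {i : ι} {p : X i → Prop} (h : ∀ᵐ t ∂m i, p t) :
    ∀ᵐ y ∂Measure.pi m, p (y i) :=
  (Measure.quasiMeasurePreserving_eval m i).ae h

theorem integral_sq_sum_eq_sum_integral_sq {f : ∀ i, X i → ℝ} (hf : ∀ i, MemLp (f i) 2 (m i))
    (hmean : ∀ i j, i ≠ j → ∫ x, f i x ∂m i = 0 ∨ ∫ x, f j x ∂m j = 0) :
    ∫ x, (∑ i, f i (x i)) ^ 2 ∂Measure.pi m = ∑ i, ∫ x, f i x ^ 2 ∂m i := by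
  have hf' (i : ι) : MemLp (fun x : ∀ j, X j => f i (x i)) 2 (Measure.pi m) :=
    (hf i).comp_measurePreserving (measurePreserving_eval m i)
  have hprod (i j : ι) : Integrable (fun x : ∀ k, X k => f i (x i) * f j (x j)) (Measure.pi m) :=
    (hf' i).integrable_mul (hf' j)
  have hindep := ProbabilityTheory.iIndepFun_pi (μ := m) fun i => (hf i).1.aemeasurable
  simp_rw [sq, Finset.sum_mul_sum]
  rw [integral_finsetSum _ fun i _ => integrable_finsetSum _ fun j _ => hprod i j]
  refine Finset.sum_congr rfl fun i _ => ?_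
  rw [integral_finsetSum _ fun j _ => hprod i j, Finset.sum_eq_single i]
  · exact integral_comp_eval ((hf i).1.mul (hf i).1)
  · intro j _ hji
    rw [(hindep.indepFun hji.symm).integral_fun_mul_eq_mul_integral (hf' i).1 (hf' j).1,
      integral_comp_eval (hf i).1, integral_comp_eval (hf j).1]
    rcases hmean i j hji.symm with h | h <;> simp [h]
  · simp

theorem sum_integral_abs_le {f : ∀ i, X i → ℝ} (hf : ∀ i, MemLp (f i) 2 (m i)) {ε : ℝ}
    (hε : 0 < ε) :
    ∑ i, ∫ x, |f i x| ∂m i ≤ Fintype.card ι * (ε / 2) + (∑ i, ∫ x, f i x ^ 2 ∂m i) / (2 * ε) := by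
  refine (Finset.sum_le_sum fun i _ => integral_abs_le_half_add (hf i) hε).trans_eq ?_
  rw [Finset.sum_add_distrib, Finset.sum_div, Finset.sum_const, nsmul_eq_mul, Finset.card_univ]

theorem sum_integral_mul_le {f g : ∀ i, X i → ℝ} {D δ : ℝ} (hf : ∀ i, ∀ᵐ x ∂m i, |f i x| ≤ D)
    (hg : ∀ i, ∀ᵐ x ∂m i, |g i x| ≤ δ) :
    ∑ i, ∫ x, f i x * g i x ∂m i ≤ Fintype.card ι * (D * δ) := by
  have hterm (i : ι) : ∫ x, f i x * g i x ∂m i ≤ D * δ := by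
    refine (le_abs_self _).trans ?_
    rw [← Real.norm_eq_abs]
    refine (norm_integral_le_of_norm_le (integrable_const (D * δ)) ?_).trans_eq (by simp)
    filter_upwards [hf i, hg i] with x h1 h2
    rw [norm_mul]
    exact mul_le_mul h1 h2 (norm_nonneg _) ((abs_nonneg _).trans h1)
  refine (Finset.sum_le_sum fun i _ => hterm i).trans_eq ?_
  rw [Finset.sum_const, nsmul_eq_mul, Finset.card_univ]

variable [DecidableEq ι]

variable (m) in
theorem measurePreserving_update_prod (i : ι) :
    MeasurePreserving (fun p : X i × (∀ j, X j) => update p.2 i p.1)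
      ((m i).prod (Measure.pi m)) (Measure.pi m) := by
  have hmeas : Measurable fun p : X i × (∀ j, X j) => update p.2 i p.1 :=
    measurable_update' (a := i) |>.comp (measurable_snd.prodMk measurable_fst)
  refine ⟨hmeas, (Measure.pi_eq fun s hs => ?_).symm⟩
  have hpre : (fun p : X i × (∀ j, X j) => update p.2 i p.1) ⁻¹' Set.univ.pi s
      = s i ×ˢ Set.univ.pi (update s i Set.univ) := by
    ext ⟨x, y⟩
    simp only [Set.mem_preimage, Set.mem_prod, Set.mem_univ_pi]
    rw [forall_update_iff (p := fun j (t : X j) => t ∈ s j),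
      forall_update_iff (p := fun j (S : Set (X j)) => y j ∈ S)]
    simp
  rw [Measure.map_apply hmeas (MeasurableSet.univ_pi hs), hpre, Measure.prod_prod,
    Measure.pi_pi, ← Finset.mul_prod_erase _ (fun j => m j (s j)) (Finset.mem_univ i)]
  congr 1
  rw [← Finset.mul_prod_erase _ _ (Finset.mem_univ i), update_self, measure_univ, one_mul]
  exact Finset.prod_congr rfl fun j hj => by rw [update_of_ne (Finset.ne_of_mem_erase hj)]

theorem integral_eq_integral_integral_update {E : Type*} [NormedAddCommGroup E]
    [NormedSpace ℝ E] (i : ι) {F : (∀ j, X j) → E} (hF : Integrable F (Measure.pi m)) :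
    ∫ x, F x ∂Measure.pi m = ∫ t, ∫ y, F (update y i t) ∂Measure.pi m ∂m i := by
  have h := measurePreserving_update_prod m i
  have hmap := integral_map (f := F) h.measurable.aemeasurable (by rw [h.map_eq]; exact hF.1)
  rw [h.map_eq] at hmap
  rw [hmap, integral_prod (fun p => F (update p.2 i p.1)) ((h.integrable_comp hF.1).2 hF)]

theorem ae_ae_update_of_ae {i : ι} {p : (∀ j, X j) → Prop} (h : ∀ᵐ x ∂Measure.pi m, p x) :
    ∀ᵐ t ∂m i, ∀ᵐ y ∂Measure.pi m, p (update y i t) :=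
  Measure.ae_ae_of_ae_prod ((measurePreserving_update_prod m i).quasiMeasurePreserving.ae h)

theorem integral_comp_eval_mul {i : ι} {g : X i → ℝ} {F : (∀ j, X j) → ℝ}
    (hg : MemLp g ⊤ (m i)) (hF : Integrable F (Measure.pi m)) :
    ∫ x, g (x i) * F x ∂Measure.pi m = ∫ t, g t * ∫ y, F (update y i t) ∂Measure.pi m ∂m i := by
  have hgF : Integrable (fun x : ∀ j, X j => g (x i) * F x) (Measure.pi m) :=
    (hg.comp_measurePreserving (measurePreserving_eval m i)).integrable_mul
      (memLp_one_iff_integrable.2 hF)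
  simp_rw [integral_eq_integral_integral_update i hgF, update_self, integral_const_mul]

end Pi

section Schrodinger

variable {N : ℕ} {X : Fin N → Type*} [∀ i, MeasurableSpace (X i)] {m : ∀ i, Measure (X i)}
  {K : (∀ i, X i) → ℝ} {a b c : ℝ} {φ ψ : ∀ i, X i → ℝ}

structure BddTupleBy (m : ∀ i, Measure (X i)) (c : ℝ) (φ : ∀ i, X i → ℝ) : Prop where
  nonneg : 0 ≤ c
  measurable : ∀ j, Measurable (φ j)
  ae_abs_le : ∀ j, ∀ᵐ x ∂m j, |φ j x| ≤ c

theorem BddTupleBy.memLp (hφ : BddTupleBy m c φ) (j : Fin N) : MemLp (φ j) ⊤ (m j) :=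
  memLp_top_of_bound (hφ.measurable j).aestronglyMeasurable c (hφ.ae_abs_le j)

theorem BddTuple.exists_bddTupleBy (hφ : BddTuple m φ) : ∃ c, BddTupleBy m c φ :=
  ⟨_, ENNReal.toReal_nonneg, fun j => (hφ j).1,
    ae_abs_le_toReal_iSup_eLpNorm_top fun j => (hφ j).2⟩

noncomputable def schrA (m : ∀ i, Measure (X i)) (K : (∀ i, X i) → ℝ) (φ : ∀ i, X i → ℝ)
    (i : Fin N) (t : X i) : ℝ :=
  ∫ y, K (update y i t) * exp (∑ j ∈ Finset.univ.erase i, φ j (y j)) ∂Measure.pi m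

noncomputable def schrR (m : ∀ i, Measure (X i)) (φ : ∀ i, X i → ℝ) (i : Fin N) : ℝ :=
  ∫ y, exp (∑ j ∈ Finset.univ.erase i, φ j (y j)) ∂Measure.pi m

theorem schrT_eq_exp_mul_schrA (i : Fin N) (t : X i) :
    schrT m K φ i t = exp (φ i t) * schrA m K φ i t := by
  rw [schrT, schrA, ← integral_const_mul]
  congr 1 with y
  rw [gammaFn, ← Finset.add_sum_erase _ _ (Finset.mem_univ i), update_self, exp_add,
    Finset.sum_congr rfl fun j hj => by rw [update_of_ne (Finset.ne_of_mem_erase hj)]]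
  ring

variable [∀ i, IsProbabilityMeasure (m i)]

theorem InE.integral_sub_eq_zero_or (hφ : InE m φ) (hψ : InE m ψ) {i j : Fin N} (hij : i ≠ j) :
    ∫ x, (φ i x - ψ i x) ∂m i = 0 ∨ ∫ x, (φ j x - ψ j x) ∂m j = 0 := by
  have hval : (i : ℕ) < N - 1 ∨ (j : ℕ) < N - 1 := by
    have := Fin.val_ne_of_ne hij; have := i.isLt; have := j.isLt; omega
  have h (k : Fin N) (hk : (k : ℕ) < N - 1) : ∫ x, (φ k x - ψ k x) ∂m k = 0 := by
    rw [integral_sub ((hφ.1 k).2.integrable le_top) ((hψ.1 k).2.integrable le_top), hφ.2 k hk,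
      hψ.2 k hk, sub_zero]
  exact hval.imp (h i) (h j)

theorem ae_abs_sum_le (hc : 0 ≤ c) {s : Finset (Fin N)} (h : ∀ j ∈ s, ∀ᵐ x ∂m j, |φ j x| ≤ c) :
    ∀ᵐ y ∂Measure.pi m, |∑ j ∈ s, φ j (y j)| ≤ N * c := by
  filter_upwards [(eventually_all_finset s).2 fun j hj => ae_eval_of_ae (h j hj)] with y hy
  calc |∑ j ∈ s, φ j (y j)| ≤ ∑ j ∈ s, |φ j (y j)| := Finset.abs_sum_le_sum_abs _ _
    _ ≤ s.card • c := Finset.sum_le_card_nsmul _ _ _ hy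
    _ ≤ N * c := by
      rw [nsmul_eq_mul]
      gcongr
      simpa using s.card_le_univ

theorem ae_exp_sum_mem_Icc (hc : 0 ≤ c) {s : Finset (Fin N)}
    (h : ∀ j ∈ s, ∀ᵐ x ∂m j, |φ j x| ≤ c) :
    ∀ᵐ y ∂Measure.pi m, exp (∑ j ∈ s, φ j (y j)) ∈ Set.Icc (exp (-(N * c))) (exp (N * c)) := by
  filter_upwards [ae_abs_sum_le hc h] with y hy
  exact ⟨exp_le_exp.2 (neg_le_of_abs_le hy), exp_le_exp.2 (le_of_abs_le hy)⟩

theorem integrable_exp_sum (hφ : BddTupleBy m c φ) (s : Finset (Fin N)) :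
    Integrable (fun y => exp (∑ j ∈ s, φ j (y j))) (Measure.pi m) :=
  have := hφ.measurable
  Integrable.of_mem_Icc _ _ (Measurable.aemeasurable (by fun_prop))
    (ae_exp_sum_mem_Icc hφ.nonneg fun j _ => hφ.ae_abs_le j)

theorem schrR_mem_Icc (hφ : ∀ j, Measurable (φ j)) (hc : 0 ≤ c) {i : Fin N}
    (h : ∀ j ∈ Finset.univ.erase i, ∀ᵐ x ∂m j, |φ j x| ≤ c) :
    schrR m φ i ∈ Set.Icc (exp (-(N * c))) (exp (N * c)) :=
  (convex_Icc _ _).integral_mem isClosed_Icc (ae_exp_sum_mem_Icc hc h)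
    (Integrable.of_mem_Icc _ _ (Measurable.aemeasurable (by fun_prop))
      (ae_exp_sum_mem_Icc hc h))

theorem integrable_gammaFn (ha : 0 ≤ a) (hK : Measurable K)
    (hKb : ∀ᵐ x ∂Measure.pi m, a ≤ K x ∧ K x ≤ b) (hφ : BddTupleBy m c φ) :
    Integrable (gammaFn K φ) (Measure.pi m) := by
  have := hφ.measurable
  refine Integrable.of_mem_Icc 0 (b * exp (N * c))
    (Measurable.aemeasurable (by unfold gammaFn; fun_prop)) ?_
  filter_upwards [hKb, ae_exp_sum_mem_Icc hφ.nonneg fun j _ => hφ.ae_abs_le j] with x hKx hE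
  exact ⟨mul_nonneg (ha.trans hKx.1) (exp_pos _).le,
    mul_le_mul hKx.2 hE.2 (exp_pos _).le (ha.trans (hKx.1.trans hKx.2))⟩

theorem integrable_update_mul_exp_sum (hK : Measurable K) {i : Fin N} {t : X i}
    (ht : ∀ᵐ y ∂Measure.pi m, a ≤ K (update y i t) ∧ K (update y i t) ≤ b)
    (hφ : BddTupleBy m c φ) (s : Finset (Fin N)) :
    Integrable (fun y => K (update y i t) * exp (∑ j ∈ s, φ j (y j))) (Measure.pi m) :=
  (integrable_exp_sum hφ s).bdd_mul (hK.comp measurable_update_left).aestronglyMeasurable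
    (ht.mono fun _ hy => abs_le_max_abs_abs hy.1 hy.2)

theorem schrA_mem_Icc (hK : Measurable K) (hKb : ∀ᵐ x ∂Measure.pi m, a ≤ K x ∧ K x ≤ b)
    (hφ : BddTupleBy m c φ) (i : Fin N) :
    ∀ᵐ t ∂m i, schrA m K φ i t ∈ Set.Icc (a * schrR m φ i) (b * schrR m φ i) := by
  filter_upwards [ae_ae_update_of_ae hKb] with t ht
  have hE := integrable_exp_sum hφ (Finset.univ.erase i)
  have hKE := integrable_update_mul_exp_sum hK ht hφ (Finset.univ.erase i)
  rw [schrR, ← integral_const_mul, ← integral_const_mul]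
  exact ⟨integral_mono_ae (hE.const_mul a) hKE
      (ht.mono fun y hy => mul_le_mul_of_nonneg_right hy.1 (exp_pos _).le),
    integral_mono_ae hKE (hE.const_mul b)
      (ht.mono fun y hy => mul_le_mul_of_nonneg_right hy.2 (exp_pos _).le)⟩

theorem ae_le_schrA (ha : 0 ≤ a) (hK : Measurable K)
    (hKb : ∀ᵐ x ∂Measure.pi m, a ≤ K x ∧ K x ≤ b) (hφ : BddTupleBy m c φ) (i : Fin N) :
    ∀ᵐ t ∂m i, a * exp (-(N * c)) ≤ schrA m K φ i t :=
  (schrA_mem_Icc hK hKb hφ i).mono fun _ ht =>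
    (mul_le_mul_of_nonneg_left (schrR_mem_Icc hφ.measurable hφ.nonneg
      fun j _ => hφ.ae_abs_le j).1 ha).trans ht.1

theorem ae_mem_Icc_of_schrT_eq (ha : 0 < a) (hab : a ≤ b) {M : ℝ} (hM : 0 < M)
    (hK : Measurable K) (hKb : ∀ᵐ x ∂Measure.pi m, a ≤ K x ∧ K x ≤ b)
    (hφ : BddTupleBy m c φ) {μ : ∀ i, X i → ℝ} {i : Fin N}
    (hμ : ∀ᵐ t ∂m i, 1 / M ≤ μ i t ∧ μ i t ≤ M) (hT : schrT m K φ i =ᵐ[m i] μ i) :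
    ∀ᵐ t ∂m i, φ i t ∈
      Set.Icc (-log (M * b) - log (schrR m φ i)) (log (M / a) - log (schrR m φ i)) := by
  have hb : 0 < b := ha.trans_le hab
  have hR : 0 < schrR m φ i :=
    (exp_pos _).trans_le (schrR_mem_Icc hφ.measurable hφ.nonneg fun j _ => hφ.ae_abs_le j).1
  filter_upwards [schrA_mem_Icc hK hKb hφ i, hT, hμ] with t hA hTt hμt
  rw [schrT_eq_exp_mul_schrA] at hTt
  have hlow : 1 / M ≤ b * (exp (φ i t) * schrR m φ i) := by
    nlinarith [mul_le_mul_of_nonneg_left hA.2 (exp_pos (φ i t)).le]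
  have hup : a * (exp (φ i t) * schrR m φ i) ≤ M := by
    nlinarith [mul_le_mul_of_nonneg_left hA.1 (exp_pos (φ i t)).le]
  have hE : 0 < exp (φ i t) * schrR m φ i := by positivity
  have hlog : φ i t = log (exp (φ i t) * schrR m φ i) - log (schrR m φ i) := by
    rw [log_mul (exp_pos _).ne' hR.ne', log_exp]; ring
  rw [hlog]
  refine ⟨sub_le_sub_right ?_ _, sub_le_sub_right ?_ _⟩
  · rw [← log_inv]
    refine log_le_log (by positivity) ?_
    rw [show (M * b)⁻¹ = 1 / M / b by ring, div_le_iff₀ hb]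
    linarith
  · refine log_le_log hE ?_
    rw [le_div_iff₀ ha]
    linarith

noncomputable def aprioriBound (N : ℕ) (a b M : ℝ) : ℝ :=
  (N + 1) * (|log (M / a)| + |log (M * b)|)

theorem bddTupleBy_aprioriBound (ha : 0 < a) (hab : a ≤ b) {M : ℝ} (hM : 0 < M)
    (hK : Measurable K) (hKb : ∀ᵐ x ∂Measure.pi m, a ≤ K x ∧ K x ≤ b) (hφ : InE m φ)
    {μ : ∀ i, X i → ℝ} (hμ : ∀ i, ∀ᵐ t ∂m i, 1 / M ≤ μ i t ∧ μ i t ≤ M)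
    (hT : ∀ i, schrT m K φ i =ᵐ[m i] μ i) :
    BddTupleBy m (aprioriBound N a b M) φ := by
  obtain ⟨c, hc⟩ := BddTuple.exists_bddTupleBy hφ.1
  set ω := |log (M / a)| + |log (M * b)|
  have hω : 0 ≤ ω := by positivity
  have hosc (i : Fin N) := ae_mem_Icc_of_schrT_eq ha hab hM hK hKb hc (hμ i) (hT i)
  have hmean (i : Fin N) (hi : (i : ℕ) < N - 1) : ∀ᵐ t ∂m i, |φ i t| ≤ ω :=
    (ae_abs_le_of_integral_eq_zero (hc.measurable i).aemeasurable (hosc i) (hφ.2 i hi)).mono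
      fun t ht => ht.trans (by linarith [le_abs_self (log (M / a)), le_abs_self (log (M * b))])
  refine ⟨mul_nonneg (by positivity) hω, hc.measurable, fun i => ?_⟩
  by_cases hi : (i : ℕ) < N - 1
  · exact (hmean i hi).mono fun t ht => ht.trans (le_mul_of_one_le_left hω (by simp))
  -- every other index has mean zero, which pins down the normalisation `schrR m φ i`
  have hR := schrR_mem_Icc (i := i) hc.measurable hω fun j hj => hmean j (by
    have := Fin.val_ne_of_ne (Finset.ne_of_mem_erase hj); have := i.isLt; have := j.isLt; omega)
  have hlogR : |log (schrR m φ i)| ≤ N * ω :=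
    abs_le.2 ⟨(le_log_iff_exp_le ((exp_pos _).trans_le hR.1)).2 hR.1,
      (log_le_iff_le_exp ((exp_pos _).trans_le hR.1)).2 hR.2⟩
  filter_upwards [hosc i] with t ht
  show |φ i t| ≤ (N + 1) * ω
  rw [abs_le]
  constructor <;> linarith [ht.1, ht.2, abs_le.1 hlogR, le_abs_self (log (M * b)),
    le_abs_self (log (M / a)), abs_nonneg (log (M / a)), abs_nonneg (log (M * b))]

theorem integral_gammaFn_mul_sum (ha : 0 ≤ a) (hK : Measurable K)
    (hKb : ∀ᵐ x ∂Measure.pi m, a ≤ K x ∧ K x ≤ b) (hφ : BddTupleBy m c φ)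
    {μ : ∀ i, X i → ℝ} (hT : ∀ i, schrT m K φ i =ᵐ[m i] μ i)
    {g : ∀ i, X i → ℝ} (hg : ∀ i, MemLp (g i) ⊤ (m i)) :
    ∫ x, gammaFn K φ x * ∑ i, g i (x i) ∂Measure.pi m = ∑ i, ∫ t, g i t * μ i t ∂m i := by
  have hγ := integrable_gammaFn ha hK hKb hφ
  simp_rw [Finset.mul_sum]
  have hint (i : Fin N) : Integrable (fun x => gammaFn K φ x * g i (x i)) (Measure.pi m) :=
    hγ.mul_of_top_left ((hg i).comp_measurePreserving (measurePreserving_eval m i))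
  rw [integral_finsetSum _ fun i _ => hint i]
  refine Finset.sum_congr rfl fun i _ => ?_
  simp_rw [mul_comm (gammaFn K φ _)]
  rw [integral_comp_eval_mul (hg i) hγ]
  exact integral_congr_ae ((hT i).mono fun t ht => congrArg (g i t * ·) ht)

theorem ae_mul_sq_sum_sub_le (ha : 0 ≤ a) (hKb : ∀ᵐ x ∂Measure.pi m, a ≤ K x ∧ K x ≤ b)
    (hφ : BddTupleBy m c φ) (hψ : BddTupleBy m c ψ) :
    ∀ᵐ x ∂Measure.pi m, a * exp (-(N * c)) * (∑ i, (φ i (x i) - ψ i (x i))) ^ 2 ≤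
      (gammaFn K φ x - gammaFn K ψ x) * ∑ i, (φ i (x i) - ψ i (x i)) := by
  filter_upwards [hKb, ae_exp_sum_mem_Icc hφ.nonneg fun j _ => hφ.ae_abs_le j,
    ae_exp_sum_mem_Icc hψ.nonneg fun j _ => hψ.ae_abs_le j] with x hKx hEφ hEψ
  have key := mul_sq_le_exp_sub_exp_mul_sub hEφ.1 hEψ.1
  rw [Finset.sum_sub_distrib, gammaFn, gammaFn, mul_assoc, ← mul_sub, mul_assoc]
  exact (mul_le_mul_of_nonneg_left key ha).trans
    (mul_le_mul_of_nonneg_right hKx.1 ((by positivity : (0 : ℝ) ≤ _ * _).trans key))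

theorem mul_sum_integral_sq_sub_le (ha : 0 ≤ a) (hK : Measurable K)
    (hKb : ∀ᵐ x ∂Measure.pi m, a ≤ K x ∧ K x ≤ b) (hφ : BddTupleBy m c φ)
    (hψ : BddTupleBy m c ψ)
    (hmean : ∀ i j, i ≠ j → ∫ x, (φ i x - ψ i x) ∂m i = 0 ∨ ∫ x, (φ j x - ψ j x) ∂m j = 0)
    {μ ν : ∀ i, X i → ℝ} (hTφ : ∀ i, schrT m K φ i =ᵐ[m i] μ i)
    (hTψ : ∀ i, schrT m K ψ i =ᵐ[m i] ν i) (hμ : ∀ i, Integrable (μ i) (m i))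
    (hν : ∀ i, Integrable (ν i) (m i)) :
    a * exp (-(N * c)) * ∑ i, ∫ t, (φ i t - ψ i t) ^ 2 ∂m i ≤
      ∑ i, ∫ t, (φ i t - ψ i t) * (μ i t - ν i t) ∂m i := by
  have hΔ (i : Fin N) : MemLp (fun t => φ i t - ψ i t) ⊤ (m i) := (hφ.memLp i).sub (hψ.memLp i)
  have hS : MemLp (fun x => ∑ i, (φ i (x i) - ψ i (x i))) ⊤ (Measure.pi m) :=
    memLp_finsetSum _ fun i _ => (hΔ i).comp_measurePreserving (measurePreserving_eval m i)
  have hγφ : Integrable (fun x => gammaFn K φ x * ∑ i, (φ i (x i) - ψ i (x i))) (Measure.pi m) :=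
    (integrable_gammaFn ha hK hKb hφ).mul_of_top_left hS
  have hγψ : Integrable (fun x => gammaFn K ψ x * ∑ i, (φ i (x i) - ψ i (x i))) (Measure.pi m) :=
    (integrable_gammaFn ha hK hKb hψ).mul_of_top_left hS
  calc a * exp (-(N * c)) * ∑ i, ∫ t, (φ i t - ψ i t) ^ 2 ∂m i
      = ∫ x, a * exp (-(N * c)) * (∑ i, (φ i (x i) - ψ i (x i))) ^ 2 ∂Measure.pi m := by
        rw [integral_const_mul,
          integral_sq_sum_eq_sum_integral_sq (fun i => (hΔ i).mono_exponent le_top) hmean]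
    _ ≤ ∫ x, (gammaFn K φ x - gammaFn K ψ x) * ∑ i, (φ i (x i) - ψ i (x i)) ∂Measure.pi m :=
        integral_mono_ae ((hS.mono_exponent (p := 2) le_top).integrable_sq.const_mul _)
          (((integrable_gammaFn ha hK hKb hφ).sub
            (integrable_gammaFn ha hK hKb hψ)).mul_of_top_left hS)
          (ae_mul_sq_sum_sub_le ha hKb hφ hψ)
    _ = ∑ i, ∫ t, (φ i t - ψ i t) * μ i t ∂m i - ∑ i, ∫ t, (φ i t - ψ i t) * ν i t ∂m i := by
        simp_rw [sub_mul (gammaFn K φ _)]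
        rw [integral_sub hγφ hγψ, integral_gammaFn_mul_sum ha hK hKb hφ hTφ hΔ,
          integral_gammaFn_mul_sum ha hK hKb hψ hTψ hΔ]
    _ = ∑ i, ∫ t, (φ i t - ψ i t) * (μ i t - ν i t) ∂m i := by
        rw [← Finset.sum_sub_distrib]
        refine Finset.sum_congr rfl fun i _ => ?_
        simp_rw [mul_sub]
        exact (integral_sub ((hμ i).mul_of_top_right (hΔ i))
          ((hν i).mul_of_top_right (hΔ i))).symm

theorem ae_abs_schrA_sub_schrA_le (ha : 0 ≤ a) (hK : Measurable K)
    (hKb : ∀ᵐ x ∂Measure.pi m, a ≤ K x ∧ K x ≤ b) (hφ : BddTupleBy m c φ)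
    (hψ : BddTupleBy m c ψ) (i : Fin N) :
    ∀ᵐ t ∂m i, |schrA m K φ i t - schrA m K ψ i t| ≤
      b * exp (N * c) * ∑ j, ∫ x, |φ j x - ψ j x| ∂m j := by
  have hΔ (j : Fin N) : Integrable (fun y : ∀ k, X k => |φ j (y j) - ψ j (y j)|) (Measure.pi m) :=
    integrable_comp_eval (((hφ.memLp j).sub (hψ.memLp j)).integrable le_top).abs
  have hbound : ∫ y, b * exp (N * c) * ∑ j, |φ j (y j) - ψ j (y j)| ∂Measure.pi m =
      b * exp (N * c) * ∑ j, ∫ x, |φ j x - ψ j x| ∂m j := by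
    rw [integral_const_mul, integral_finsetSum _ fun j _ => hΔ j]
    exact congrArg _ (Finset.sum_congr rfl fun j _ =>
      integral_comp_eval (f := fun x => |φ j x - ψ j x|)
        ((hφ.measurable j).sub (hψ.measurable j)).abs.aestronglyMeasurable)
  filter_upwards [ae_ae_update_of_ae hKb] with t ht
  rw [schrA, schrA, ← integral_sub (integrable_update_mul_exp_sum hK ht hφ _)
    (integrable_update_mul_exp_sum hK ht hψ _), ← hbound, ← Real.norm_eq_abs]
  refine norm_integral_le_of_norm_le ((integrable_finsetSum _ fun j _ => hΔ j).const_mul _) ?_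
  filter_upwards [ht,
    ae_abs_sum_le hφ.nonneg fun j (_ : j ∈ Finset.univ.erase i) => hφ.ae_abs_le j,
    ae_abs_sum_le hψ.nonneg fun j (_ : j ∈ Finset.univ.erase i) => hψ.ae_abs_le j]
    with y hKy hSφ hSψ
  rw [Real.norm_eq_abs, ← mul_sub, abs_mul, abs_of_nonneg (ha.trans hKy.1), mul_assoc]
  refine mul_le_mul hKy.2 ?_ (abs_nonneg _) (ha.trans (hKy.1.trans hKy.2))
  refine (abs_exp_sub_exp_le (le_of_abs_le hSφ) (le_of_abs_le hSψ)).trans ?_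
  gcongr
  rw [← Finset.sum_sub_distrib]
  exact (Finset.abs_sum_le_sum_abs _ _).trans (Finset.sum_le_sum_of_subset_of_nonneg
    (Finset.subset_univ _) fun _ _ _ => abs_nonneg _)

theorem ae_abs_sub_le_mul_abs_sub_add (ha : 0 < a) (hK : Measurable K)
    (hKb : ∀ᵐ x ∂Measure.pi m, a ≤ K x ∧ K x ≤ b) (hφ : BddTupleBy m c φ)
    (hψ : BddTupleBy m c ψ) {M : ℝ} (hM : 0 < M) {μ ν : ∀ i, X i → ℝ} {i : Fin N}
    (hμ : ∀ᵐ t ∂m i, 1 / M ≤ μ i t) (hν : ∀ᵐ t ∂m i, 1 / M ≤ ν i t)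
    (hTφ : schrT m K φ i =ᵐ[m i] μ i) (hTψ : schrT m K ψ i =ᵐ[m i] ν i) :
    ∀ᵐ t ∂m i, |φ i t - ψ i t| ≤ M * |μ i t - ν i t| +
      b * exp (N * c) / (a * exp (-(N * c))) * ∑ j, ∫ x, |φ j x - ψ j x| ∂m j := by
  have hκ : 0 < a * exp (-(N * c)) := by positivity
  filter_upwards [ae_le_schrA ha.le hK hKb hφ i, ae_le_schrA ha.le hK hKb hψ i,
    ae_abs_schrA_sub_schrA_le ha.le hK hKb hφ hψ i, hTφ, hTψ, hμ, hν]
    with t hAφ hAψ hdA hφt hψt hμt hνt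
  rw [schrT_eq_exp_mul_schrA] at hφt hψt
  have hφlog : φ i t = log (μ i t) - log (schrA m K φ i t) := by
    rw [← hφt, log_mul (exp_pos _).ne' (hκ.trans_le hAφ).ne', log_exp, add_sub_cancel_right]
  have hψlog : ψ i t = log (ν i t) - log (schrA m K ψ i t) := by
    rw [← hψt, log_mul (exp_pos _).ne' (hκ.trans_le hAψ).ne', log_exp, add_sub_cancel_right]
  have hlogμ : |log (μ i t) - log (ν i t)| ≤ M * |μ i t - ν i t| := by
    simpa [mul_comm] using abs_log_sub_log_le (one_div_pos.2 hM) hμt hνt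
  have hlogA : |log (schrA m K φ i t) - log (schrA m K ψ i t)| ≤
      b * exp (N * c) / (a * exp (-(N * c))) * ∑ j, ∫ x, |φ j x - ψ j x| ∂m j := by
    rw [div_mul_eq_mul_div]
    exact (abs_log_sub_log_le hκ hAφ hAψ).trans (div_le_div_of_nonneg_right hdA hκ.le)
  rw [hφlog, hψlog, sub_sub_sub_comm]
  exact (abs_sub _ _).trans (add_le_add hlogμ hlogA)

-- `M` is the Lipschitz constant of `log` on `[1/M, ∞)`; the second term is the cost of absorbing
-- half of `‖φ - ψ‖_∞` by AM-GM.
noncomputable def lipschitzConst (N : ℕ) (a b c M : ℝ) : ℝ :=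
  M + (b * exp (N * c) / (a * exp (-(N * c)))) ^ 2 * N ^ 2 / (2 * (a * exp (-(N * c))))

theorem ae_abs_sub_le_half_add (ha : 0 < a) (hab : a ≤ b) (hK : Measurable K)
    (hKb : ∀ᵐ x ∂Measure.pi m, a ≤ K x ∧ K x ≤ b) (hφ : BddTupleBy m c φ)
    (hψ : BddTupleBy m c ψ)
    (hmean : ∀ i j, i ≠ j → ∫ x, (φ i x - ψ i x) ∂m i = 0 ∨ ∫ x, (φ j x - ψ j x) ∂m j = 0)
    {M : ℝ} (hM : 0 < M) {μ ν : ∀ i, X i → ℝ} (hμ : InFppM m M μ) (hν : InFppM m M ν)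
    (hTφ : ∀ i, schrT m K φ i =ᵐ[m i] μ i) (hTψ : ∀ i, schrT m K ψ i =ᵐ[m i] ν i)
    {D δ : ℝ} (hD : ∀ i, ∀ᵐ t ∂m i, |φ i t - ψ i t| ≤ D)
    (hδ : ∀ i, ∀ᵐ t ∂m i, |μ i t - ν i t| ≤ δ) (hδ0 : 0 ≤ δ) (i : Fin N) :
    ∀ᵐ t ∂m i, |φ i t - ψ i t| ≤ D / 2 + lipschitzConst N a b c M * δ := by
  unfold lipschitzConst
  set κ := a * exp (-(N * c))
  set L := b * exp (N * c) / κ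
  set I := ∑ j, ∫ x, (φ j x - ψ j x) ^ 2 ∂m j
  have hκ : 0 < κ := by positivity
  have hL : 0 < L := div_pos (mul_pos (ha.trans_le hab) (exp_pos _)) hκ
  have hI : κ * I ≤ N * (D * δ) := by
    refine (mul_sum_integral_sq_sub_le ha.le hK hKb hφ hψ hmean hTφ hTψ
      (fun j => (hμ.1.1.1 j).2.integrable le_top)
      (fun j => (hν.1.1.1 j).2.integrable le_top)).trans ?_
    simpa using sum_integral_mul_le hD hδ
  rcases le_or_gt D 0 with hD0 | hD0
  · filter_upwards [hD i] with t ht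
    have : 0 ≤ (M + L ^ 2 * N ^ 2 / (2 * κ)) * δ := by positivity
    linarith
  have hLT : L * ∑ j, ∫ x, |φ j x - ψ j x| ∂m j ≤ D / 2 + L ^ 2 * N ^ 2 / (2 * κ) * δ := by
    have hN : (0 : ℝ) < N := Nat.cast_pos.2 i.pos
    -- AM-GM with weight `D / (L N)`, chosen so that the `D`-term comes with the factor `1/2`
    have hT := sum_integral_abs_le (f := fun j x => φ j x - ψ j x)
      (fun j => ((hφ.memLp j).sub (hψ.memLp j)).mono_exponent le_top)
      (by positivity : 0 < D / (L * N))
    rw [Fintype.card_fin] at hT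
    refine (mul_le_mul_of_nonneg_left hT hL.le).trans ?_
    have e : L * (N * (D / (L * N) / 2) + I / (2 * (D / (L * N)))) =
        D / 2 + L ^ 2 * N / (2 * D) * (κ * I) / κ := by
      field_simp
    rw [e]
    gcongr ?_ + ?_
    · exact le_rfl
    calc L ^ 2 * N / (2 * D) * (κ * I) / κ ≤ L ^ 2 * N / (2 * D) * (N * (D * δ)) / κ := by gcongr
      _ = L ^ 2 * N ^ 2 / (2 * κ) * δ := by field_simp
  filter_upwards [ae_abs_sub_le_mul_abs_sub_add ha hK hKb hφ hψ hM
    ((hμ.2 i).mono fun _ h => h.1) ((hν.2 i).mono fun _ h => h.1) (hTφ i) (hTψ i), hδ i]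
    with t ht hδt
  calc |φ i t - ψ i t| ≤ M * |μ i t - ν i t| + L * ∑ j, ∫ x, |φ j x - ψ j x| ∂m j := ht
    _ ≤ M * δ + (D / 2 + L ^ 2 * N ^ 2 / (2 * κ) * δ) :=
        add_le_add (mul_le_mul_of_nonneg_left hδt hM.le) hLT
    _ = _ := by ring

end Schrodinger

end SchrodingerMap

open SchrodingerMap in
theorem schrodinger_map_Linfty_lipschitz_general
    {N : ℕ} {X : Fin N → Type*} [∀ i, MeasurableSpace (X i)]
    (m : ∀ i, MeasureTheory.Measure (X i)) [∀ i, MeasureTheory.IsProbabilityMeasure (m i)]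
    (K : (∀ i, X i) → ℝ) (a b : ℝ) (ha : 0 < a) (hab : a ≤ b)
    (hK : Measurable K) (hKb : ∀ᵐ x ∂MeasureTheory.Measure.pi m, a ≤ K x ∧ K x ≤ b) :
    ∀ M : ℝ, 1 ≤ M → ∃ C : ℝ, ∀ φ ψ μ ν : ∀ i, X i → ℝ,
      InE m φ → InE m ψ → InFppM m M μ → InFppM m M ν →
      (∀ i, schrT m K φ i =ᵐ[m i] μ i) → (∀ i, schrT m K ψ i =ᵐ[m i] ν i) →
      ⨆ i, eLpNorm (fun x => φ i x - ψ i x) ⊤ (m i) ≤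
        ENNReal.ofReal C * ⨆ i, eLpNorm (fun x => μ i x - ν i x) ⊤ (m i) := by
  intro M hM
  have hM0 : 0 < M := one_pos.trans_le hM
  set B := aprioriBound N a b M
  set C := lipschitzConst N a b B M
  have hC : 0 ≤ C := by unfold C lipschitzConst; positivity
  refine ⟨2 * C, fun φ ψ μ ν hφ hψ hμ hν hTφ hTψ => ?_⟩
  have hφB := bddTupleBy_aprioriBound ha hab hM0 hK hKb hφ hμ.2 hTφ
  have hψB := bddTupleBy_aprioriBound ha hab hM0 hK hKb hψ hν.2 hTψ
  have hΔ (i : Fin N) : MemLp (fun x => φ i x - ψ i x) ⊤ (m i) := (hφB.memLp i).sub (hψB.memLp i)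
  have hμν (i : Fin N) : MemLp (fun x => μ i x - ν i x) ⊤ (m i) :=
    (hμ.1.1.1 i).2.sub (hν.1.1.1 i).2
  set D := (⨆ i, eLpNorm (fun x => φ i x - ψ i x) ⊤ (m i)).toReal
  set δ := (⨆ i, eLpNorm (fun x => μ i x - ν i x) ⊤ (m i)).toReal
  have hD : D ≤ D / 2 + C * δ := ENNReal.toReal_le_of_le_ofReal (by positivity) <|
    iSup_eLpNorm_top_le_ofReal <| ae_abs_sub_le_half_add ha hab hK hKb hφB hψB
      (fun _ _ => hφ.integral_sub_eq_zero_or hψ) hM0 hμ hν hTφ hTψ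
      (ae_abs_le_toReal_iSup_eLpNorm_top hΔ) (ae_abs_le_toReal_iSup_eLpNorm_top hμν)
      ENNReal.toReal_nonneg
  calc ⨆ i, eLpNorm (fun x => φ i x - ψ i x) ⊤ (m i) = ENNReal.ofReal D :=
        (ENNReal.ofReal_toReal (iSup_ne_top fun i => (hΔ i).eLpNorm_ne_top)).symm
    _ ≤ ENNReal.ofReal (2 * C) * ENNReal.ofReal δ := by
        rw [← ENNReal.ofReal_mul (by positivity)]
        exact ENNReal.ofReal_le_ofReal (by linarith)
    _ ≤ _ := by gcongr; exact ENNReal.ofReal_toReal_le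

/-- `L^∞` Lipschitz estimate for the Schrödinger map. -/
theorem schrodinger_map_Linfty_lipschitz
    {N : ℕ} (hN : 2 ≤ N) {X : Fin N → Type*} [∀ i, MeasurableSpace (X i)]
    (m : ∀ i, MeasureTheory.Measure (X i)) [∀ i, MeasureTheory.IsProbabilityMeasure (m i)]
    (K : (∀ i, X i) → ℝ) (a b : ℝ) (ha : 0 < a) (hab : a ≤ b)
    (hK : Measurable K) (hKb : ∀ᵐ x ∂MeasureTheory.Measure.pi m, a ≤ K x ∧ K x ≤ b) :
    ∀ M : ℝ, 1 ≤ M → ∃ C : ℝ, ∀ φ ψ μ ν : ∀ i, X i → ℝ,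
      InE m φ → InE m ψ → InFppM m M μ → InFppM m M ν →
      (∀ i, schrT m K φ i =ᵐ[m i] μ i) → (∀ i, schrT m K ψ i =ᵐ[m i] ν i) →
      ⨆ i, eLpNorm (fun x => φ i x - ψ i x) ⊤ (m i) ≤
        ENNReal.ofReal C * ⨆ i, eLpNorm (fun x => μ i x - ν i x) ⊤ (m i) :=
  schrodinger_map_Linfty_lipschitz_general m K a b ha hab hK hKb
end
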